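/- Let B be a symmetric real d×d matrix with λ_max(B) < 0, let A ∈ M_d(ℝ), and let ν be a (Lévy) measure on ℝ^d such that ∫ ‖A ⊗ A‖₂ ‖vec(y yᵀ)‖₂ dν(y) + 2 λ_max(B) < 0. Then every eigenvalue of the matrix (B ⊗ I) + (I ⊗ B) + (A ⊗ A) ∫ y yᵀ dν(y) (viewed appropriately as acting on ℝ^{d²}) has negative real part. -/

import Mathlib

open Matrix MeasureTheory ProbabilityTheory Kronecker
noncomputable section

/-- Spectral (operator 2-) norm of a real matrix. -/
def specNorm {n : Type*} [Fintype n] [DecidableEq n] (M : Matrix n n ℝ) : ℝ :=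
  ‖Matrix.toEuclideanCLM (𝕜 := ℝ) M‖

/-- Frobenius norm of a real square matrix. -/
def frobNorm {n : Type*} [Fintype n] (M : Matrix n n ℝ) : ℝ :=
  Real.sqrt ((M * Mᵀ).trace)

/-- Euclidean norm of a finitely indexed real vector. -/
def eNorm {ι : Type*} [Fintype ι] (x : ι → ℝ) : ℝ :=
  Real.sqrt (∑ i, x i ^ 2)

/-- The vec operator, stacking the columns of a matrix. -/
def vecOp {d : ℕ} (X : Matrix (Fin d) (Fin d) ℝ) : Fin d × Fin d → ℝ :=
  fun p => X p.2 p.1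

/-- Largest eigenvalue of a Hermitian (symmetric) real matrix. -/
def lamMax {n : Type*} [Fintype n] [DecidableEq n] {M : Matrix n n ℝ}
    (hM : M.IsHermitian) : ℝ := ⨆ i, hM.eigenvalues i

/-- Smallest eigenvalue of a Hermitian (symmetric) real matrix. -/
def lamMin {n : Type*} [Fintype n] [DecidableEq n] {M : Matrix n n ℝ}
    (hM : M.IsHermitian) : ℝ := ⨅ i, hM.eigenvalues i

/-! If `M v = μ v` for a real matrix `M` and `v = x + i y`, then
`Re μ · (‖x‖² + ‖y‖²) = xᵀ M x + yᵀ M y`, so `Re μ` is at most any constant `c` with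
`xᵀ M x ≤ c ‖x‖²`. For the Kronecker sum `B ⊗ I + I ⊗ B` one may take `c = 2 λ_max(B)`, because
`λ_max(B) I - B` is positive semidefinite and so are its Kronecker products with `I`. For the
perturbation `(A ⊗ A)(C ⊗ I)`, `C = ∫ y yᵀ dν`, one may take `c = ‖A ⊗ A‖₂ ‖C‖_F`, using
`(C ⊗ I) vec X = vec (X Cᵀ)`; finally `‖C‖_F ≤ ∫ ‖vec (y yᵀ)‖ dν` by the triangle inequality
for the Bochner integral in `ℝ^{d²}`. -/

section EuclideanNorm

variable {ι : Type*} [Fintype ι]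

lemma eNorm_eq_norm_toLp (x : ι → ℝ) : eNorm x = ‖WithLp.toLp 2 x‖ := by
  simp [eNorm, EuclideanSpace.norm_eq, Real.norm_eq_abs, sq_abs]

lemma eNorm_nonneg (x : ι → ℝ) : 0 ≤ eNorm x :=
  Real.sqrt_nonneg _

lemma eNorm_mul_self (x : ι → ℝ) : eNorm x * eNorm x = x ⬝ᵥ x := by
  rw [eNorm, Real.mul_self_sqrt (by positivity)]
  simp [dotProduct, sq]

lemma eNorm_integral_le_integral_eNorm {X : Type*} [MeasurableSpace X] {μ : Measure X}
    {f : X → ι → ℝ} (hf : ∀ i, Integrable (fun x => f x i) μ) :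
    eNorm (fun i => ∫ x, f x i ∂μ) ≤ ∫ x, eNorm (f x) ∂μ := by
  have h : (fun i => ∫ x, f x i ∂μ) = WithLp.ofLp (∫ x, WithLp.toLp 2 (f x) ∂μ) := by
    ext i
    exact (eval_integral_piLp (f := fun x => WithLp.toLp 2 (f x)) hf i).symm
  simp_rw [h, eNorm_eq_norm_toLp, WithLp.toLp_ofLp]
  exact norm_integral_le_integral_norm _

lemma eNorm_vec_secondMoment_le {ν : Measure (ι → ℝ)}
    (hmom : ∀ i j, Integrable (fun y => y i * y j) ν) :
    eNorm (Matrix.of fun i j => ∫ y, y i * y j ∂ν).vec ≤ ∫ y, eNorm (vecMulVec y y).vec ∂ν :=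
  eNorm_integral_le_integral_eNorm (f := fun y => (vecMulVec y y).vec) fun p => hmom p.2 p.1

end EuclideanNorm

section Frobenius

attribute [local instance] Matrix.frobeniusNormedAddCommGroup

variable {m n : Type*} [Fintype m] [Fintype n]

lemma eNorm_vec_eq_frobenius_norm (M : Matrix m n ℝ) : eNorm M.vec = ‖M‖ := by
  rw [frobenius_norm_def, eNorm, Real.sqrt_eq_rpow, Fintype.sum_prod_type, Finset.sum_comm]
  simp [Real.norm_eq_abs, sq_abs]

lemma eNorm_kronecker_one_mulVec_le [DecidableEq m] (C : Matrix n n ℝ) (x : n × m → ℝ) :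
    eNorm ((C ⊗ₖ (1 : Matrix m m ℝ)) *ᵥ x) ≤ eNorm C.vec * eNorm x := by
  obtain ⟨X, rfl⟩ : ∃ X : Matrix m n ℝ, X.vec = x := vec_bijective.2 x
  simp only [kronecker_mulVec_vec, Matrix.one_mul, eNorm_vec_eq_frobenius_norm, mul_comm ‖C‖]
  exact (frobenius_norm_mul X Cᵀ).trans_eq (by rw [frobenius_norm_transpose])

end Frobenius

section QuadraticForm

variable {n m : Type*} [Fintype n] [DecidableEq n] [Fintype m] [DecidableEq m]

lemma dotProduct_mulVec_le_specNorm_mul (M : Matrix n n ℝ) (x y : n → ℝ) :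
    x ⬝ᵥ M *ᵥ y ≤ specNorm M * (eNorm x * eNorm y) := by
  have h : x ⬝ᵥ M *ᵥ y
      = inner ℝ (WithLp.toLp 2 x) (toEuclideanCLM (𝕜 := ℝ) M (WithLp.toLp 2 y)) := by
    rw [toEuclideanCLM_toLp, EuclideanSpace.inner_eq_star_dotProduct]
    simp [dotProduct_comm]
  calc x ⬝ᵥ M *ᵥ y
      ≤ ‖WithLp.toLp 2 x‖ * ‖toEuclideanCLM (𝕜 := ℝ) M (WithLp.toLp 2 y)‖ :=
        h ▸ real_inner_le_norm _ _
    _ ≤ ‖WithLp.toLp 2 x‖ * (specNorm M * ‖WithLp.toLp 2 y‖) :=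
        mul_le_mul_of_nonneg_left (ContinuousLinearMap.le_opNorm _ _) (norm_nonneg _)
    _ = specNorm M * (eNorm x * eNorm y) := by
        rw [eNorm_eq_norm_toLp, eNorm_eq_norm_toLp]; ring

lemma dotProduct_mul_kronecker_one_mulVec_le (R : Matrix (n × m) (n × m) ℝ)
    (C : Matrix n n ℝ) (x : n × m → ℝ) :
    x ⬝ᵥ (R * (C ⊗ₖ (1 : Matrix m m ℝ))) *ᵥ x ≤ specNorm R * eNorm C.vec * (x ⬝ᵥ x) := by
  rw [← mulVec_mulVec, ← eNorm_mul_self]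
  calc x ⬝ᵥ R *ᵥ ((C ⊗ₖ 1) *ᵥ x)
      ≤ specNorm R * (eNorm x * eNorm ((C ⊗ₖ 1) *ᵥ x)) :=
        dotProduct_mulVec_le_specNorm_mul _ _ _
    _ ≤ specNorm R * (eNorm x * (eNorm C.vec * eNorm x)) := by
        gcongr
        · exact norm_nonneg _
        · exact eNorm_nonneg x
        · exact eNorm_kronecker_one_mulVec_le C x
    _ = specNorm R * eNorm C.vec * (eNorm x * eNorm x) := by ring

lemma dotProduct_mulVec_le_of_posSemidef_smul_one_sub {M : Matrix n n ℝ} {c : ℝ}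
    (h : (c • (1 : Matrix n n ℝ) - M).PosSemidef) (x : n → ℝ) :
    x ⬝ᵥ M *ᵥ x ≤ c * (x ⬝ᵥ x) := by
  have := h.dotProduct_mulVec_nonneg x
  rw [star_trivial, sub_mulVec, smul_mulVec, one_mulVec, dotProduct_sub, dotProduct_smul,
    smul_eq_mul] at this
  linarith

lemma posSemidef_lamMax_smul_one_sub {B : Matrix n n ℝ} (hB : B.IsHermitian) :
    (lamMax hB • (1 : Matrix n n ℝ) - B).PosSemidef := by
  refine posSemidef_iff_isHermitian_and_spectrum_nonneg.2
    ⟨(isHermitian_one.smul (.all _)).sub hB, ?_⟩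
  rw [← Algebra.algebraMap_eq_smul_one, ← spectrum.singleton_sub_eq,
    hB.spectrum_real_eq_range_eigenvalues]
  rintro _ ⟨_, rfl, _, ⟨i, rfl⟩, rfl⟩
  exact sub_nonneg.2 (le_ciSup (Set.finite_range hB.eigenvalues).bddAbove i)

lemma dotProduct_mulVec_kroneckerSum_le {B₁ : Matrix n n ℝ} {B₂ : Matrix m m ℝ}
    (hB₁ : B₁.IsHermitian) (hB₂ : B₂.IsHermitian) (x : n × m → ℝ) :
    x ⬝ᵥ (B₁ ⊗ₖ (1 : Matrix m m ℝ) + (1 : Matrix n n ℝ) ⊗ₖ B₂) *ᵥ x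
      ≤ (lamMax hB₁ + lamMax hB₂) * (x ⬝ᵥ x) := by
  refine dotProduct_mulVec_le_of_posSemidef_smul_one_sub ?_ x
  have h := ((posSemidef_lamMax_smul_one_sub hB₁).kronecker PosSemidef.one).add
    (PosSemidef.one.kronecker (posSemidef_lamMax_smul_one_sub hB₂))
  have heq : (lamMax hB₁ + lamMax hB₂) • (1 : Matrix (n × m) (n × m) ℝ)
        - (B₁ ⊗ₖ (1 : Matrix m m ℝ) + (1 : Matrix n n ℝ) ⊗ₖ B₂)
      = (lamMax hB₁ • 1 - B₁) ⊗ₖ (1 : Matrix m m ℝ)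
        + (1 : Matrix n n ℝ) ⊗ₖ (lamMax hB₂ • 1 - B₂) := by
    ext ⟨i, j⟩ ⟨k, l⟩
    simp only [Matrix.sub_apply, Matrix.add_apply, Matrix.smul_apply, kroneckerMap_apply,
      one_apply, Prod.mk.injEq, smul_eq_mul]
    split_ifs <;> simp_all [add_sub_add_comm]
  rw [heq]
  exact h

lemma re_le_of_dotProduct_mulVec_le {M : Matrix n n ℝ} {c : ℝ}
    (hM : ∀ x, x ⬝ᵥ M *ᵥ x ≤ c * (x ⬝ᵥ x)) {μ : ℂ}
    (hμ : μ ∈ spectrum ℂ (M.map Complex.ofReal)) : μ.re ≤ c := by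
  rw [← spectrum_toLin', ← Module.End.hasEigenvalue_iff_mem_spectrum] at hμ
  obtain ⟨v, hv⟩ := hμ.exists_hasEigenvector
  have hMv : M.map Complex.ofReal *ᵥ v = μ • v := by simpa using hv.apply_eq_smul
  set x := fun i => (v i).re
  set y := fun i => (v i).im
  have hx : M *ᵥ x = μ.re • x - μ.im • y := by
    ext i
    simpa [mulVec, dotProduct, Complex.re_sum, x, y] using congrArg (fun w => (w i).re) hMv
  have hy : M *ᵥ y = μ.im • x + μ.re • y := by
    ext i
    simpa [mulVec, dotProduct, Complex.im_sum, x, y, add_comm] using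
      congrArg (fun w => (w i).im) hMv
  have hsq : 0 < x ⬝ᵥ x + y ⬝ᵥ y := by
    obtain ⟨k, hk⟩ := Function.ne_iff.mp hv.2
    have hnormSq : x ⬝ᵥ x + y ⬝ᵥ y = ∑ i, Complex.normSq (v i) := by
      simp [dotProduct, Complex.normSq_apply, Finset.sum_add_distrib, x, y]
    rw [hnormSq]
    exact Finset.sum_pos' (fun i _ => Complex.normSq_nonneg _)
      ⟨k, Finset.mem_univ k, Complex.normSq_pos.2 hk⟩
  have hre : x ⬝ᵥ M *ᵥ x + y ⬝ᵥ M *ᵥ y = μ.re * (x ⬝ᵥ x + y ⬝ᵥ y) := by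
    rw [hx, hy]
    simp only [dotProduct_sub, dotProduct_add, dotProduct_smul, smul_eq_mul, dotProduct_comm y x]
    ring
  exact le_of_mul_le_mul_right (by linarith [hM x, hM y]) hsq

end QuadraticForm

theorem eigenvalues_neg_real_part_of_drift_condition_general (d : ℕ)
    (B A : Matrix (Fin d) (Fin d) ℝ) (hB : B.IsHermitian)
    (ν : Measure (Fin d → ℝ))
    (hmom : ∀ i j, Integrable (fun y => y i * y j) ν)
    (hcond : (∫ y, specNorm (A ⊗ₖ A) * eNorm (vecOp (vecMulVec y y)) ∂ν)
        + 2 * lamMax hB < 0) :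
    ∀ μ ∈ spectrum ℂ
      (((B ⊗ₖ (1 : Matrix (Fin d) (Fin d) ℝ) + (1 : Matrix (Fin d) (Fin d) ℝ) ⊗ₖ B)
        + (A ⊗ₖ A) * ((Matrix.of fun i j => ∫ y, y i * y j ∂ν)
            ⊗ₖ (1 : Matrix (Fin d) (Fin d) ℝ))).map Complex.ofReal),
      μ.re < 0 := by
  intro μ hμ
  refine (re_le_of_dotProduct_mulVec_le (fun x => ?_) hμ).trans_lt hcond
  have hmoment : specNorm (A ⊗ₖ A) * eNorm (Matrix.of fun i j => ∫ y, y i * y j ∂ν).vec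
      ≤ ∫ y, specNorm (A ⊗ₖ A) * eNorm (vecOp (vecMulVec y y)) ∂ν := by
    rw [integral_const_mul]
    exact mul_le_mul_of_nonneg_left (eNorm_vec_secondMoment_le hmom) (norm_nonneg _)
  have hsymm := dotProduct_mulVec_kroneckerSum_le hB hB x
  have hpert := dotProduct_mul_kronecker_one_mulVec_le (A ⊗ₖ A)
    (Matrix.of fun i j => ∫ y, y i * y j ∂ν) x
  have hx : 0 ≤ x ⬝ᵥ x := by rw [← eNorm_mul_self]; exact mul_self_nonneg _
  rw [add_mulVec, dotProduct_add]
  linarith [mul_le_mul_of_nonneg_right hmoment hx]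

/-- under the integrated drift condition, all eigenvalues of
`(B ⊗ I) + (I ⊗ B) + (A ⊗ A) ∫ y yᵀ dν(y)` have negative real part. -/
theorem eigenvalues_neg_real_part_of_drift_condition (d : ℕ)
    (B A : Matrix (Fin d) (Fin d) ℝ) (hB : B.IsHermitian) (hBneg : lamMax hB < 0)
    (ν : Measure (Fin d → ℝ))
    (hmom : ∀ i j, Integrable (fun y => y i * y j) ν)
    (hint : Integrable (fun y => specNorm (A ⊗ₖ A) * eNorm (vecOp (vecMulVec y y))) ν)
    (hcond : (∫ y, specNorm (A ⊗ₖ A) * eNorm (vecOp (vecMulVec y y)) ∂ν)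
        + 2 * lamMax hB < 0) :
    ∀ μ ∈ spectrum ℂ
      (((B ⊗ₖ (1 : Matrix (Fin d) (Fin d) ℝ) + (1 : Matrix (Fin d) (Fin d) ℝ) ⊗ₖ B)
        + (A ⊗ₖ A) * ((Matrix.of fun i j => ∫ y, y i * y j ∂ν)
            ⊗ₖ (1 : Matrix (Fin d) (Fin d) ℝ))).map Complex.ofReal),
      μ.re < 0 :=
  eigenvalues_neg_real_part_of_drift_condition_general d B A hB ν hmom hcond
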